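/- arXiv:1507.01072 — 3 statements merged into one kernel-verified Lean document; each statement's English description precedes it below -/
import Mathlib

section
/- Let M be a unital C*-algebra with a faithful tracial state τ, let n ≥ 2, and let (u₁, …, uₙ) be an L-free family of unitaries in M. Then ‖u₁ + u₂ + ⋯ + uₙ‖ = 2√(n−1). -/
open scoped BigOperators ComplexOrder

section Defs

variable {A : Type*} [Ring A] [StarRing A] [Algebra ℂ A]

/-- `τ` is a (ℂ-linear) tracial state on the unital star ℂ-algebra `A`. -/
def IsTracialState (τ : A → ℂ) : Prop :=
  (∀ (c : ℂ) (x y : A), τ (c • x + y) = c * τ x + τ y) ∧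
  τ 1 = 1 ∧ (∀ x : A, 0 ≤ τ (star x * x)) ∧ (∀ x y : A, τ (x * y) = τ (y * x))

/-- `τ` is faithful. -/
def IsFaithful (τ : A → ℂ) : Prop := ∀ x : A, τ (star x * x) = 0 → x = 0

def IsProjection (p : A) : Prop := star p = p ∧ p * p = p

def IsUnitary (u : A) : Prop := star u * u = 1 ∧ u * star u = 1

/-- The alternating word `x_{i 0} (x_{i 1})* x_{i 2} (x_{i 3})* ⋯`. -/
def LWord {n m : ℕ} (x : Fin n → A) (i : Fin m → Fin n) : A :=
  (List.ofFn fun s : Fin m => if (s : ℕ) % 2 = 0 then x (i s) else star (x (i s))).prod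

/-- The alternating word `(x_{i 0})* x_{i 1} (x_{i 2})* x_{i 3} ⋯`. -/
def LWordStar {n m : ℕ} (x : Fin n → A) (i : Fin m → Fin n) : A :=
  (List.ofFn fun s : Fin m => if (s : ℕ) % 2 = 0 then star (x (i s)) else x (i s)).prod

/-- L-freeness of a finite family with respect to `τ`. -/
def IsLFree {n : ℕ} (τ : A → ℂ) (x : Fin n → A) : Prop :=
  ∀ (k : ℕ), 1 ≤ k → ∀ i : Fin (2 * k) → Fin n,
    (∀ s t : Fin (2 * k), (t : ℕ) = (s : ℕ) + 1 → i s ≠ i t) →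
    τ (LWord x i) = 0 ∧ τ (LWordStar x i) = 0

/-- Integer powers of a unitary: negative powers are powers of the adjoint. -/
def zpowU (u : A) (k : ℤ) : A := if 0 ≤ k then u ^ k.toNat else star u ^ (-k).toNat

/-- `v₁, …, v_m` are freely independent Haar unitaries with respect to `τ`. -/
def AreHaarFree {m : ℕ} (τ : A → ℂ) (v : Fin m → A) : Prop :=
  ∀ (r : ℕ), 1 ≤ r → ∀ (i : Fin r → Fin m) (e : Fin r → ℤ),
    (∀ s, e s ≠ 0) → (∀ s t : Fin r, (t : ℕ) = (s : ℕ) + 1 → i s ≠ i t) →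
    τ ((List.ofFn fun s : Fin r => zpowU (v (i s)) (e s)).prod) = 0

/-- `X` and `Y` are freely independent sets with respect to `τ`: every alternating
word with letters from `X` and `Y` has zero trace. -/
def FreeSets (τ : A → ℂ) (X Y : Set A) : Prop :=
  ∀ (m : ℕ), 1 ≤ m → ∀ z : Fin m → A,
    ((∀ s : Fin m, if (s : ℕ) % 2 = 0 then z s ∈ X else z s ∈ Y) ∨
     (∀ s : Fin m, if (s : ℕ) % 2 = 0 then z s ∈ Y else z s ∈ X)) →
    τ ((List.ofFn z).prod) = 0

end Defs

/-!
Write `x = u₁ + ⋯ + uₙ`. Expanding `(x x⋆)ᵏ` gives a sum of words `u_{a₁} u_{b₁}⋆ ⋯ u_{aₖ} u_{bₖ}⋆`.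
Cancelling adjacent `u_a u_a⋆` and `u_b⋆ u_b` turns each word into a reduced alternating word, whose
trace vanishes by L-freeness unless it is empty; so `τ((x x⋆)ᵏ)` counts the words that cancel
completely. Tracking the length of the partially reduced word gives a weighted walk on `ℕ` whose
counts grow like `(4 (n - 1))ᵏ`: the upper bound is a direct induction, the lower bound comes from
a sine eigenvector of the walk on `{0, …, H + 2}`. Finally, for a positive element `b` of a
C⋆-algebra with a faithful state, `‖b‖` is the exponential growth rate of `τ(bᵏ)`, so
`‖x‖² = ‖x x⋆‖ = 4 (n - 1)`.
-/

open Filter Topology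

theorem le_of_eventually_mul_pow_le {a B c : ℝ} (hB : 0 ≤ B) (hc : 0 < c)
    (h : ∀ᶠ k in atTop, c * a ^ k ≤ B ^ k) : a ≤ B := by
  by_contra! hBa
  have ha : 0 < a := hB.trans_lt hBa
  have hlim : Tendsto (fun k => (B / a) ^ k) atTop (𝓝 0) :=
    tendsto_pow_atTop_nhds_zero_of_lt_one (div_nonneg hB ha.le) ((div_lt_one ha).2 hBa)
  have hle : ∀ᶠ k in atTop, c ≤ (B / a) ^ k := h.mono fun k hk => by
    rwa [div_pow, le_div_iff₀ (pow_pos ha k)]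
  exact hc.not_ge (ge_of_tendsto hlim hle)

section TracialState

variable {A : Type*} [Ring A] [StarRing A] [Algebra ℂ A] {τ : A → ℂ}

theorem IsTracialState.map_zero (hτ : IsTracialState τ) : τ 0 = 0 := by
  simpa using hτ.1 1 0 0

def IsTracialState.toLinearMap (hτ : IsTracialState τ) : A →ₗ[ℂ] ℂ where
  toFun := τ
  map_add' x y := by simpa using hτ.1 1 x y
  map_smul' c x := by simpa [hτ.map_zero] using hτ.1 c x 0

@[simp] theorem IsTracialState.toLinearMap_apply (hτ : IsTracialState τ) (x : A) :
    hτ.toLinearMap x = τ x := rfl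

theorem IsTracialState.nontrivial (hτ : IsTracialState τ) : Nontrivial A :=
  ⟨⟨1, 0, fun h => by simpa [h, hτ.map_zero] using hτ.2.1⟩⟩

theorem IsTracialState.map_real_smul (hτ : IsTracialState τ) (r : ℝ) (a : A) :
    τ (r • a) = r * τ a := by
  rw [← algebraMap_smul ℂ r a, ← hτ.toLinearMap_apply, map_smul, hτ.toLinearMap_apply]
  rfl

theorem IsTracialState.map_algebraMap (hτ : IsTracialState τ) (r : ℝ) :
    τ (algebraMap ℝ A r) = r := by
  rw [Algebra.algebraMap_eq_smul_one, hτ.map_real_smul, hτ.2.1, mul_one]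

end TracialState

section CStarAlgebra

variable {A : Type*} [CStarAlgebra A] [PartialOrder A] [StarOrderedRing A] {τ : A → ℂ}

theorem IsTracialState.map_nonneg (hτ : IsTracialState τ) {a : A} (ha : 0 ≤ a) : 0 ≤ τ a := by
  obtain ⟨s, rfl⟩ := CStarAlgebra.nonneg_iff_eq_star_mul_self.1 ha
  exact hτ.2.2.1 s

theorem IsTracialState.mono (hτ : IsTracialState τ) {a b : A} (hab : a ≤ b) : τ a ≤ τ b := by
  have := hτ.map_nonneg (sub_nonneg.2 hab)
  rwa [← hτ.toLinearMap_apply, map_sub, sub_nonneg] at this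

theorem IsFaithful.map_pos (hτ : IsTracialState τ) (hτf : IsFaithful τ) {a : A} (ha : 0 ≤ a)
    (ha0 : a ≠ 0) : 0 < τ a := by
  refine (hτ.map_nonneg ha).lt_of_ne fun h => ha0 ?_
  obtain ⟨s, rfl⟩ := CStarAlgebra.nonneg_iff_eq_star_mul_self.1 ha
  rw [hτf s h.symm, mul_zero]

theorem IsTracialState.map_pow_le (hτ : IsTracialState τ) {b : A} (hb : 0 ≤ b) (k : ℕ) :
    τ (b ^ k) ≤ ((‖b‖ ^ k : ℝ) : ℂ) := by
  have := hτ.nontrivial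
  calc τ (b ^ k) ≤ τ (algebraMap ℝ A ‖b ^ k‖) :=
        hτ.mono ((IsSelfAdjoint.of_nonneg hb).pow k).le_algebraMap_norm_self
    _ = ((‖b ^ k‖ : ℝ) : ℂ) := hτ.map_algebraMap _
    _ ≤ ((‖b‖ ^ k : ℝ) : ℂ) := Complex.real_le_real.2 (norm_pow_le b k)

/-- A continuous bump supported on `(P, ∞)` isolates the part of the spectrum of `b` above `P`;
faithfulness makes its trace a positive constant `δ`. -/
theorem IsFaithful.exists_mul_pow_le_map_pow (hτ : IsTracialState τ) (hτf : IsFaithful τ)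
    {b : A} (hb : 0 ≤ b) {P : ℝ} (hP : 0 ≤ P) (hPb : P < ‖b‖) :
    ∃ δ : ℝ, 0 < δ ∧ ∀ k : ℕ, ((δ * P ^ k : ℝ) : ℂ) ≤ τ (b ^ k) := by
  have := hτ.nontrivial
  set g : ℝ → ℝ := fun r => min (max (r - P) 0) 1 with hg
  have hg_cont : ContinuousOn g (spectrum ℝ b) := by fun_prop
  have ha : 0 ≤ cfc g b := cfc_nonneg fun r _ => le_min (le_max_right _ _) zero_le_one
  have ha0 : cfc g b ≠ 0 := by
    intro h
    rw [← cfc_zero ℝ b] at h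
    have h0 := eqOn_of_cfc_eq_cfc h hg_cont (by fun_prop) (.of_nonneg hb)
      (CStarAlgebra.norm_mem_spectrum_of_nonneg hb)
    have : 0 < g ‖b‖ := lt_min (lt_max_of_lt_left (by linarith)) one_pos
    exact this.ne' h0
  obtain ⟨δ, hδ, hδτ⟩ : ∃ δ : ℝ, 0 < δ ∧ (δ : ℂ) = τ (cfc g b) := by
    have hpos := Complex.lt_def.1 (hτf.map_pos hτ ha ha0)
    exact ⟨_, hpos.1, Complex.ext rfl hpos.2⟩
  refine ⟨δ, hδ, fun k => ?_⟩
  have hle : (P ^ k) • cfc g b ≤ b ^ k := by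
    rw [← cfc_const_mul _ g b hg_cont, ← cfc_pow_id (R := ℝ) b k]
    refine cfc_mono (fun r hr => ?_) (continuousOn_const.mul hg_cont) (by fun_prop)
    have hr0 : 0 ≤ r := spectrum_nonneg_of_nonneg hb hr
    rcases le_or_gt r P with hrP | hrP
    · simp [hg, max_eq_right (sub_nonpos.2 hrP), pow_nonneg hr0]
    · calc P ^ k * g r ≤ P ^ k * 1 := by gcongr; exact min_le_right _ _
        _ ≤ r ^ k := by rw [mul_one]; gcongr
  calc (((δ * P ^ k : ℝ)) : ℂ) = τ ((P ^ k) • cfc g b) := by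
        rw [hτ.map_real_smul, ← hδτ]; push_cast; ring
    _ ≤ τ (b ^ k) := hτ.mono hle

theorem IsFaithful.norm_eq_of_moments (hτ : IsTracialState τ) (hτf : IsFaithful τ)
    {b : A} (hb : 0 ≤ b) {f : ℕ → ℝ} (hf : ∀ k, τ (b ^ k) = f k) {ρ : ℝ} (hρ : 0 ≤ ρ)
    (hup : ∀ k, f k ≤ ρ ^ k) {μ : ℕ → ℝ} (hμ : Tendsto μ atTop (𝓝 ρ))
    (hlow : ∀ H, ∃ c > 0, ∀ᶠ k in atTop, c * μ H ^ k ≤ f k) : ‖b‖ = ρ := by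
  have hf_le : ∀ k, f k ≤ ‖b‖ ^ k := fun k =>
    Complex.real_le_real.1 (hf k ▸ hτ.map_pow_le hb k)
  refine le_antisymm (not_lt.1 fun hρb => ?_) (le_of_tendsto' hμ fun H => ?_)
  · obtain ⟨δ, hδ, hδf⟩ := hτf.exists_mul_pow_le_map_pow hτ hb
      (P := (ρ + ‖b‖) / 2) (by positivity) (by linarith)
    have := le_of_eventually_mul_pow_le hρ hδ <| Eventually.of_forall fun k =>
      (Complex.real_le_real.1 (hf k ▸ hδf k)).trans (hup k)
    linarith
  · obtain ⟨c, hc, hcf⟩ := hlow H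
    exact le_of_eventually_mul_pow_le (norm_nonneg b) hc <| hcf.mono fun k hk =>
      hk.trans (hf_le k)

end CStarAlgebra

theorem Fin.sum_ite_eq_add_mul {n : ℕ} (c : Fin n) (A B : ℕ) :
    (∑ b : Fin n, if b = c then A else B) = A + (n - 1) * B := by
  rw [Finset.sum_ite, Finset.filter_eq', Finset.filter_ne']
  simp [Finset.card_erase_of_mem]

namespace PairWord

open Real

variable {n : ℕ}

/-- A list `[(a₁, b₁), …, (aₖ, bₖ)]` stands for the word `u_{a₁} u_{b₁}⋆ ⋯ u_{aₖ} u_{bₖ}⋆` (see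
`eval`). For reduced `q`, `reduceCons (a, b) q` is the free reduction of `u_a u_b⋆ · q`. -/
def reduceCons : Fin n × Fin n → List (Fin n × Fin n) → List (Fin n × Fin n)
  | (a, b), [] => if a = b then [] else [(a, b)]
  | (a, b), (c, d) :: q =>
    if b = c then (if a = d then q else (a, d) :: q)
    else if a = b then (c, d) :: q else (a, b) :: (c, d) :: q

def reduce (q : List (Fin n × Fin n)) : List (Fin n × Fin n) := q.foldr reduceCons []

def IsReduced (q : List (Fin n × Fin n)) : Prop :=
  (∀ p ∈ q, p.1 ≠ p.2) ∧ q.IsChain fun p p' => p.2 ≠ p'.1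

theorem isReduced_nil : IsReduced ([] : List (Fin n × Fin n)) := by
  simp [IsReduced]

theorem isReduced_cons {p : Fin n × Fin n} {q : List (Fin n × Fin n)} :
    IsReduced (p :: q) ↔ p.1 ≠ p.2 ∧ (∀ p' ∈ q.head?, p.2 ≠ p'.1) ∧ IsReduced q := by
  simp only [IsReduced, List.forall_mem_cons, List.isChain_cons]
  tauto

theorem IsReduced.reduceCons {q : List (Fin n × Fin n)} (hq : IsReduced q)
    (p : Fin n × Fin n) : IsReduced (reduceCons p q) := by
  obtain ⟨a, b⟩ := p
  rcases q with _ | ⟨⟨c, d⟩, q⟩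
  · by_cases hab : a = b <;> simp [PairWord.reduceCons, hab, isReduced_cons, isReduced_nil]
  · obtain ⟨hcd, hd, hq⟩ := isReduced_cons.1 hq
    simp only [PairWord.reduceCons]
    split_ifs with hbc had hab
    · exact hq
    · exact isReduced_cons.2 ⟨had, hd, hq⟩
    · exact isReduced_cons.2 ⟨hcd, hd, hq⟩
    · exact isReduced_cons.2 ⟨hab, by simpa using hbc, isReduced_cons.2 ⟨hcd, hd, hq⟩⟩

theorem isReduced_reduce (q : List (Fin n × Fin n)) : IsReduced (reduce q) := by
  induction q with
  | nil => exact isReduced_nil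
  | cons p q ih => exact ih.reduceCons p

def cancelCount (n k : ℕ) (S : List (Fin n × Fin n)) : ℕ :=
  (Finset.univ.filter fun v : Fin k → Fin n × Fin n => (List.ofFn v).foldr reduceCons S = []).card

theorem cancelCount_zero (S : List (Fin n × Fin n)) :
    cancelCount n 0 S = if S = [] then 1 else 0 := by
  by_cases hS : S = [] <;> simp [cancelCount, hS]

theorem cancelCount_succ (k : ℕ) (S : List (Fin n × Fin n)) :
    cancelCount n (k + 1) S = ∑ p : Fin n × Fin n, cancelCount n k (reduceCons p S) := by
  simp only [cancelCount, Finset.card_filter]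
  rw [← (Fin.snocEquiv fun _ => Fin n × Fin n).sum_comp, Fintype.sum_prod_type]
  refine Finset.sum_congr rfl fun p _ => Finset.sum_congr rfl fun w _ => ?_
  rw [List.ofFn_succ', List.concat_eq_append, List.foldr_concat]
  simp

/-- From a reduced word of length `h + 1`, a letter `(a, b)` shortens it in `1` way, keeps its
length in `2 (n - 1)` ways and lengthens it in `(n - 1) ^ 2` ways. -/
def walkCount (n : ℕ) : ℕ → ℕ → ℕ
  | 0, 0 => 1
  | 0, _ + 1 => 0
  | k + 1, 0 => n * walkCount n k 0 + n * (n - 1) * walkCount n k 1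
  | k + 1, h + 1 =>
    walkCount n k h + 2 * (n - 1) * walkCount n k (h + 1) + (n - 1) ^ 2 * walkCount n k (h + 2)

theorem sum_length_reduceCons_nil (F : ℕ → ℕ) :
    ∑ p : Fin n × Fin n, F (reduceCons p []).length = n * F 0 + n * (n - 1) * F 1 := by
  rw [Fintype.sum_prod_type_right]
  simp [reduceCons, apply_ite, Fin.sum_ite_eq_add_mul]
  ring

theorem sum_length_reduceCons_cons (F : ℕ → ℕ) (c d : Fin n) (q : List (Fin n × Fin n)) :
    ∑ p : Fin n × Fin n, F (reduceCons p ((c, d) :: q)).length =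
      F q.length + 2 * (n - 1) * F (q.length + 1) + (n - 1) ^ 2 * F (q.length + 2) := by
  have hb : ∀ b, ∑ a, F (reduceCons (a, b) ((c, d) :: q)).length =
      if b = c then F q.length + (n - 1) * F (q.length + 1)
      else F (q.length + 1) + (n - 1) * F (q.length + 2) := by
    intro b
    by_cases hbc : b = c <;> simp [reduceCons, hbc, apply_ite, Fin.sum_ite_eq_add_mul]
  rw [Fintype.sum_prod_type_right, Finset.sum_congr rfl fun b _ => hb b, Fin.sum_ite_eq_add_mul]
  ring

theorem cancelCount_eq_walkCount (k : ℕ) :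
    ∀ {S : List (Fin n × Fin n)}, IsReduced S → cancelCount n k S = walkCount n k S.length := by
  induction k with
  | zero =>
    rintro (_ | ⟨p, S⟩) _ <;> simp [cancelCount_zero, walkCount]
  | succ k ih =>
    intro S hS
    rw [cancelCount_succ, Finset.sum_congr rfl fun p _ => ih (hS.reduceCons p)]
    rcases S with _ | ⟨⟨c, d⟩, q⟩
    · rw [sum_length_reduceCons_nil]; rfl
    · rw [sum_length_reduceCons_cons]; rfl

theorem walkCount_mul_pow_le (hn : 2 ≤ n) :
    ∀ k h, walkCount n k h * (n - 1) ^ h ≤ (4 * (n - 1)) ^ k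
  | 0, 0 => le_rfl
  | 0, _ + 1 => by simp [walkCount]
  | k + 1, 0 => by
    have h0 := walkCount_mul_pow_le hn k 0
    have h1 := walkCount_mul_pow_le hn k 1
    rw [pow_zero, mul_one] at h0
    calc walkCount n (k + 1) 0 * (n - 1) ^ 0
        = n * walkCount n k 0 + n * (walkCount n k 1 * (n - 1) ^ 1) := by
          simp only [walkCount]; ring
      _ ≤ n * (4 * (n - 1)) ^ k + n * (4 * (n - 1)) ^ k := by gcongr
      _ = 2 * n * (4 * (n - 1)) ^ k := by ring
      _ ≤ 4 * (n - 1) * (4 * (n - 1)) ^ k := Nat.mul_le_mul_right _ (by omega)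
      _ = (4 * (n - 1)) ^ (k + 1) := by ring
  | k + 1, h + 1 => by
    have h0 := walkCount_mul_pow_le hn k h
    have h1 := walkCount_mul_pow_le hn k (h + 1)
    have h2 := walkCount_mul_pow_le hn k (h + 2)
    calc walkCount n (k + 1) (h + 1) * (n - 1) ^ (h + 1)
        = (n - 1) * (walkCount n k h * (n - 1) ^ h)
          + 2 * (n - 1) * (walkCount n k (h + 1) * (n - 1) ^ (h + 1))
          + (n - 1) * (walkCount n k (h + 2) * (n - 1) ^ (h + 2)) := by
          simp only [walkCount]; ring
      _ ≤ (n - 1) * (4 * (n - 1)) ^ k + 2 * (n - 1) * (4 * (n - 1)) ^ k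
          + (n - 1) * (4 * (n - 1)) ^ k := by gcongr
      _ = (4 * (n - 1)) ^ (k + 1) := by ring

theorem one_le_walkCount (hn : 0 < n) : ∀ k h, h ≤ k → 1 ≤ walkCount n k h
  | 0, 0, _ => le_rfl
  | k + 1, 0, _ => by
    have := Nat.mul_pos hn (one_le_walkCount hn k 0 k.zero_le)
    simp only [walkCount]
    omega
  | k + 1, h + 1, hh => by
    have := one_le_walkCount hn k h (by omega)
    simp only [walkCount]
    omega

theorem walkCount_zero_le (hn : 2 ≤ n) (k : ℕ) :
    (walkCount n k 0 : ℝ) ≤ (4 * ((n : ℝ) - 1)) ^ k := by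
  have := walkCount_mul_pow_le hn k 0
  rw [pow_zero, mul_one] at this
  calc (walkCount n k 0 : ℝ) ≤ ((4 * (n - 1)) ^ k : ℕ) := by exact_mod_cast this
    _ = (4 * ((n : ℝ) - 1)) ^ k := by
      rw [Nat.cast_pow, Nat.cast_mul, Nat.cast_sub (by omega : 1 ≤ n)]
      norm_num

noncomputable def sineAngle (H : ℕ) : ℝ := π / (H + 2)

/-- `h ↦ sin (h * sineAngle H)` vanishes at `0` and `H + 2`, and is an eigenvector of
`ψ ↦ (n - 1) (ψ (h - 1) + 2 ψ h + ψ (h + 1))` with eigenvalue `sineRate n H`. -/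
noncomputable def sineRate (n H : ℕ) : ℝ := 2 * ((n : ℝ) - 1) * (1 + cos (sineAngle H))

theorem sineAngle_pos (H : ℕ) : 0 < sineAngle H := by
  unfold sineAngle; positivity

theorem sineAngle_le_pi_div_two (H : ℕ) : sineAngle H ≤ π / 2 := by
  unfold sineAngle
  gcongr
  linarith [(Nat.cast_nonneg H : (0 : ℝ) ≤ H)]

theorem sin_mul_sineAngle_top (H : ℕ) : sin (((H + 2 : ℕ) : ℝ) * sineAngle H) = 0 := by
  rw [sineAngle, Nat.cast_add, Nat.cast_two, mul_div_cancel₀ _ (by positivity), sin_pi]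

theorem sin_mul_sineAngle_add_sin (H h : ℕ) :
    sin (h * sineAngle H) + sin (((h + 2 : ℕ) : ℝ) * sineAngle H) =
      2 * cos (sineAngle H) * sin (((h + 1 : ℕ) : ℝ) * sineAngle H) := by
  have e0 : (h : ℝ) * sineAngle H = ((h + 1 : ℕ) : ℝ) * sineAngle H - sineAngle H := by
    push_cast; ring
  have e2 : ((h + 2 : ℕ) : ℝ) * sineAngle H = ((h + 1 : ℕ) : ℝ) * sineAngle H + sineAngle H := by
    push_cast; ring
  rw [e0, e2, sin_sub, sin_add]
  ring

theorem sineRate_pos (hn : 2 ≤ n) (H : ℕ) : 0 < sineRate n H := by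
  have hn' : (2 : ℝ) ≤ n := by exact_mod_cast hn
  have := cos_nonneg_of_mem_Icc ⟨by linarith [sineAngle_pos H, pi_pos],
    sineAngle_le_pi_div_two H⟩
  unfold sineRate
  nlinarith

theorem tendsto_sineRate (n : ℕ) :
    Tendsto (sineRate n) atTop (𝓝 (4 * ((n : ℝ) - 1))) := by
  have hangle : Tendsto sineAngle atTop (𝓝 0) := by
    have := tendsto_const_div_atTop_nhds_zero_nat π |>.comp (tendsto_add_atTop_nat 2)
    refine this.congr fun H => ?_
    simp [sineAngle]
  have := ((continuous_cos.tendsto 0).comp hangle).const_add 1 |>.const_mul (2 * ((n : ℝ) - 1))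
  convert this using 2
  · simp [sineRate]
  · norm_num; ring

theorem walkCount_lower (hn : 2 ≤ n) (H : ℕ) {k : ℕ} (hk : H + 1 ≤ k) {h : ℕ}
    (hh : h ≤ H + 2) :
    sineRate n H ^ (k - (H + 1)) * sin (h * sineAngle H) ≤
      walkCount n k h * ((n : ℝ) - 1) ^ h := by
  have hn1 : (1 : ℝ) ≤ n - 1 := by
    have : (2 : ℝ) ≤ n := by exact_mod_cast hn
    linarith
  have h_of_zero : ∀ {k h : ℕ}, sin (h * sineAngle H) = 0 →
      sineRate n H ^ (k - (H + 1)) * sin (h * sineAngle H) ≤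
        walkCount n k h * ((n : ℝ) - 1) ^ h := fun hs => by
    rw [hs, mul_zero]; positivity
  induction k, hk using Nat.le_induction generalizing h with
  | base =>
    rcases (by omega : h = 0 ∨ h = H + 2 ∨ (1 ≤ h ∧ h ≤ H + 1)) with rfl | rfl | ⟨h1, h2⟩
    · exact h_of_zero (by simp)
    · exact h_of_zero (sin_mul_sineAngle_top H)
    · calc sineRate n H ^ (H + 1 - (H + 1)) * sin (h * sineAngle H) ≤ 1 * 1 := by
            rw [Nat.sub_self, pow_zero]; gcongr; exact sin_le_one _
        _ ≤ walkCount n (H + 1) h * ((n : ℝ) - 1) ^ h := by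
            gcongr
            · exact_mod_cast one_le_walkCount (by omega) _ _ h2
            · exact one_le_pow₀ hn1
  | succ k hk ih =>
    obtain rfl | rfl | ⟨h1, h2⟩ : h = 0 ∨ h = H + 2 ∨ (1 ≤ h ∧ h ≤ H + 1) := by omega
    · exact h_of_zero (by simp)
    · exact h_of_zero (sin_mul_sineAngle_top H)
    obtain ⟨h, rfl⟩ : ∃ h', h = h' + 1 := ⟨h - 1, by omega⟩
    have hcast : ((walkCount n (k + 1) (h + 1) : ℕ) : ℝ) * ((n : ℝ) - 1) ^ (h + 1) =
        ((n : ℝ) - 1) * (walkCount n k h * ((n : ℝ) - 1) ^ h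
          + 2 * (walkCount n k (h + 1) * ((n : ℝ) - 1) ^ (h + 1))
          + walkCount n k (h + 2) * ((n : ℝ) - 1) ^ (h + 2)) := by
      simp only [walkCount]
      push_cast [Nat.cast_sub (by omega : 1 ≤ n)]
      ring
    have hrate : sineRate n H ^ (k + 1 - (H + 1)) * sin (((h + 1 : ℕ) : ℝ) * sineAngle H) =
        ((n : ℝ) - 1) * (sineRate n H ^ (k - (H + 1)) * sin (h * sineAngle H)
          + 2 * (sineRate n H ^ (k - (H + 1)) * sin (((h + 1 : ℕ) : ℝ) * sineAngle H))
          + sineRate n H ^ (k - (H + 1)) * sin (((h + 2 : ℕ) : ℝ) * sineAngle H)) := by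
      rw [show k + 1 - (H + 1) = k - (H + 1) + 1 by omega, pow_succ]
      have hdef : sineRate n H = 2 * ((n : ℝ) - 1) * (1 + cos (sineAngle H)) := rfl
      linear_combination (-((n : ℝ) - 1) * sineRate n H ^ (k - (H + 1))) *
        sin_mul_sineAngle_add_sin H h +
        (sineRate n H ^ (k - (H + 1)) * sin (((h + 1 : ℕ) : ℝ) * sineAngle H)) * hdef
    rw [hrate, hcast]
    gcongr ((n : ℝ) - 1) * (?_ + 2 * ?_ + ?_) <;> exact ih (by omega)

theorem walkCount_zero_lower (hn : 2 ≤ n) (H : ℕ) :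
    ∃ c > 0, ∀ᶠ k in atTop, c * sineRate n H ^ k ≤ walkCount n k 0 := by
  have hR := sineRate_pos hn H
  have hsin : 0 < sin (sineAngle H) :=
    sin_pos_of_pos_of_lt_pi (sineAngle_pos H) (by linarith [sineAngle_le_pi_div_two H, pi_pos])
  refine ⟨sin (sineAngle H) / sineRate n H ^ (H + 2), by positivity, ?_⟩
  filter_upwards [eventually_ge_atTop (H + 2)] with k hk
  obtain ⟨m, rfl⟩ : ∃ m, k = m + 1 := ⟨k - 1, by omega⟩
  have h1 := walkCount_lower hn H (by omega : H + 1 ≤ m) (h := 1) (by omega)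
  have hstep : (n - 1 : ℝ) * walkCount n m 1 ≤ walkCount n (m + 1) 0 := by
    have : (n - 1) * walkCount n m 1 ≤ walkCount n (m + 1) 0 := by
      calc (n - 1) * walkCount n m 1 ≤ n * (n - 1) * walkCount n m 1 :=
            Nat.mul_le_mul_right _ (Nat.le_mul_of_pos_left _ (by omega))
        _ ≤ walkCount n (m + 1) 0 := Nat.le_add_left _ _
    have hcast : ((n - 1 : ℕ) : ℝ) = n - 1 := by rw [Nat.cast_sub (by omega), Nat.cast_one]
    rw [← hcast]
    exact_mod_cast this
  calc sin (sineAngle H) / sineRate n H ^ (H + 2) * sineRate n H ^ (m + 1)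
      = sineRate n H ^ (m - (H + 1)) * sin ((1 : ℕ) * sineAngle H) := by
        rw [show m + 1 = m - (H + 1) + (H + 2) by omega, pow_add _ (m - (H + 1)), Nat.cast_one,
          one_mul]
        field_simp
    _ ≤ walkCount n m 1 * ((n : ℝ) - 1) ^ 1 := h1
    _ ≤ walkCount n (m + 1) 0 := by rw [pow_one, mul_comm]; exact hstep

section Eval

variable {M : Type*} [Ring M] [StarRing M]

def eval (u : Fin n → M) (q : List (Fin n × Fin n)) : M :=
  (q.map fun p => u p.1 * star (u p.2)).prod

@[simp] theorem eval_nil (u : Fin n → M) : eval u [] = 1 := rfl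

@[simp] theorem eval_cons (u : Fin n → M) (p : Fin n × Fin n) (q : List (Fin n × Fin n)) :
    eval u (p :: q) = u p.1 * star (u p.2) * eval u q := by
  simp [eval]

theorem sum_mul_star_sum_pow (u : Fin n → M) (k : ℕ) :
    ((∑ i, u i) * star (∑ i, u i)) ^ k = ∑ v : Fin k → Fin n × Fin n, eval u (List.ofFn v) := by
  induction k with
  | zero => simp
  | succ k ih =>
    have hx : (∑ i, u i) * star (∑ i, u i) = ∑ p : Fin n × Fin n, u p.1 * star (u p.2) := by
      rw [star_sum, Finset.sum_mul_sum, Fintype.sum_prod_type]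
    rw [pow_succ', ih, hx, Finset.sum_mul_sum, ← Fintype.sum_prod_type',
      ← (Fin.consEquiv fun _ => Fin n × Fin n).sum_comp]
    simp [Fin.consEquiv, List.ofFn_succ]

def lIndex (q : List (Fin n × Fin n)) (s : Fin (2 * q.length)) : Fin n :=
  if (s : ℕ) % 2 = 0 then (q[(s : ℕ) / 2]'(by omega)).1 else (q[(s : ℕ) / 2]'(by omega)).2

theorem lWord_lIndex (u : Fin n → M) (q : List (Fin n × Fin n)) :
    LWord u (lIndex q) = eval u q := by
  rw [LWord, List.ofFn_mul', List.prod_flatten, List.map_ofFn, eval,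
    ← List.ofFn_getElem_eq_map]
  refine congrArg _ (congrArg List.ofFn (funext fun j => ?_))
  have h1 : (2 * (j : ℕ) + 1) / 2 = j := by omega
  simp [lIndex, List.ofFn_succ, h1]

theorem IsReduced.lIndex_ne {q : List (Fin n × Fin n)} (hq : IsReduced q)
    (s t : Fin (2 * q.length)) (hst : (t : ℕ) = s + 1) : lIndex q s ≠ lIndex q t := by
  obtain ⟨hpair, hchain⟩ := hq
  rw [List.forall_mem_iff_getElem] at hpair
  rw [List.isChain_iff_getElem] at hchain
  obtain ⟨j, hj | hj⟩ := Nat.even_or_odd' (s : ℕ)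
  · have ht : (t : ℕ) = 2 * j + 1 := by omega
    have h0 : 2 * j / 2 = j := by omega
    have h1 : (2 * j + 1) / 2 = j := by omega
    simpa [lIndex, hj, ht, h0, h1] using hpair j (by omega)
  · have ht : (t : ℕ) = 2 * (j + 1) := by omega
    have h0 : 2 * (j + 1) / 2 = j + 1 := by omega
    have h1 : (2 * j + 1) / 2 = j := by omega
    simpa [lIndex, hj, ht, h0, h1] using hchain j (by omega)

theorem eval_reduceCons {u : Fin n → M} (hu : ∀ i, IsUnitary (u i)) (p : Fin n × Fin n)
    (q : List (Fin n × Fin n)) : eval u (reduceCons p q) = u p.1 * star (u p.2) * eval u q := by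
  obtain ⟨a, b⟩ := p
  rcases q with _ | ⟨⟨c, d⟩, q⟩
  · by_cases hab : a = b
    · simp [PairWord.reduceCons, hab, (hu b).2]
    · simp [PairWord.reduceCons, hab]
  · simp only [PairWord.reduceCons, eval_cons]
    split_ifs with hbc had hab
    · subst hbc had
      simp only [mul_assoc]
      rw [← mul_assoc (star (u b)), (hu b).1, one_mul, ← mul_assoc, (hu a).2, one_mul]
    · subst hbc; simp [mul_assoc, ← mul_assoc (star (u b)), (hu b).1]
    · subst hab; simp [(hu a).2]
    · simp only [eval_cons]

theorem eval_reduce {u : Fin n → M} (hu : ∀ i, IsUnitary (u i)) (q : List (Fin n × Fin n)) :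
    eval u (reduce q) = eval u q := by
  induction q with
  | nil => rfl
  | cons p q ih =>
    rw [reduce, List.foldr_cons, ← reduce, eval_reduceCons hu, ih, eval_cons]

theorem trace_eval_of_isReduced {τ : M → ℂ} {u : Fin n → M} (hL : IsLFree τ u)
    {q : List (Fin n × Fin n)} (hq : IsReduced q) (hne : q ≠ []) : τ (eval u q) = 0 := by
  rw [← lWord_lIndex]
  exact (hL q.length (List.length_pos_iff.2 hne) (lIndex q) hq.lIndex_ne).1

theorem trace_eval {τ : M → ℂ} (hτ1 : τ 1 = 1) {u : Fin n → M} (hu : ∀ i, IsUnitary (u i))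
    (hL : IsLFree τ u) (q : List (Fin n × Fin n)) :
    τ (eval u q) = if reduce q = [] then 1 else 0 := by
  rw [← eval_reduce hu]
  split_ifs with h
  · rw [h, eval_nil, hτ1]
  · exact trace_eval_of_isReduced hL (isReduced_reduce q) h

theorem trace_sum_mul_star_sum_pow [Algebra ℂ M] {τ : M → ℂ} (hτ : IsTracialState τ)
    {u : Fin n → M} (hu : ∀ i, IsUnitary (u i)) (hL : IsLFree τ u) (k : ℕ) :
    τ (((∑ i, u i) * star (∑ i, u i)) ^ k) = walkCount n k 0 := by
  rw [sum_mul_star_sum_pow, ← hτ.toLinearMap_apply, map_sum]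
  simp only [hτ.toLinearMap_apply, trace_eval hτ.2.1 hu hL, Finset.sum_boole]
  exact congrArg Nat.cast (cancelCount_eq_walkCount k isReduced_nil)

end Eval

end PairWord

/-- An L-free family of `n ≥ 2` unitaries satisfies
`‖u₁ + ⋯ + uₙ‖ = 2√(n-1)`. -/
theorem norm_sum_LFree_unitaries
    {M : Type*} [NormedRing M] [StarRing M] [CStarRing M] [NormedAlgebra ℂ M]
    [StarModule ℂ M] [CompleteSpace M]
    (τ : M → ℂ) (hτ : IsTracialState τ) (hτf : IsFaithful τ)
    (n : ℕ) (hn : 2 ≤ n)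
    (u : Fin n → M) (hu : ∀ i, IsUnitary (u i)) (hL : IsLFree τ u) :
    ‖∑ i, u i‖ = 2 * Real.sqrt ((n : ℝ) - 1) := by
  let _ : CStarAlgebra M := {}
  let _ := CStarAlgebra.spectralOrder M
  have := CStarAlgebra.spectralOrderedRing M
  have hn1 : (0 : ℝ) ≤ n - 1 := by
    have : (2 : ℝ) ≤ n := by exact_mod_cast hn
    linarith
  have hnorm : ‖∑ i, u i‖ ^ 2 = 4 * ((n : ℝ) - 1) := by
    rw [sq, ← CStarRing.norm_self_mul_star]
    exact hτf.norm_eq_of_moments hτ (mul_star_self_nonneg _)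
      (PairWord.trace_sum_mul_star_sum_pow hτ hu hL) (by positivity)
      (PairWord.walkCount_zero_le hn) (PairWord.tendsto_sineRate n)
      (PairWord.walkCount_zero_lower hn)
  rw [← pow_left_inj₀ (norm_nonneg _) (by positivity) two_ne_zero, hnorm, mul_pow,
    Real.sq_sqrt hn1]
  norm_num
end

section
/- Let M be a unital C*-algebra with a tracial state τ, let n ≥ 2, and let u₁, …, uₙ ∈ M be unitaries. Then the family (u₁, …, uₙ) is L-free with respect to τ if and only if the n−1 unitaries u₁* u₂, u₁* u₃, …, u₁* uₙ are freely independent Haar unitaries with respect to τ. -/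
open scoped BigOperators ComplexOrder

/-!
Put `w a = u₁* u_a`, so that `w₁ = 1` and the `w_a` with `a ≠ 1` are the unitaries
`v = u₁* u₂, …, u₁* uₙ`. Conjugating by `u₁`, every L-word in the `u`'s has the same trace as
the corresponding alternating word `w_{a₁} w_{a₂}* w_{a₃} ⋯` in the `w`'s. Deleting the letters
`w₁ = 1` from such a word leaves a reduced word in the `v`'s and their adjoints: two letters
that become adjacent were separated by a single `1` and so carry the same sign, and merging equal
neighbours gives `v_{j₁}^{e₁} ⋯ v_{j_r}^{e_r}` with nonzero exponents and `j_s ≠ j_{s+1}`.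
Conversely every such Haar word arises in this way, by spelling `v_j^e` out letter by letter and
inserting a `1` between equal-sign neighbours; the even length of an L-word is reached by adding
or removing a trailing `1`.
-/

namespace LFree

section Words

variable {ι ι' κ A : Type*} [Monoid A] [StarMul A]

def letter (x : ι → A) (b : Bool) (a : ι) : A := if b then x a else star (x a)

def altProd (x : ι → A) : Bool → List ι → A
  | _, [] => 1
  | b, a :: l => letter x b a * altProd x (!b) l

@[simp] lemma altProd_nil (x : ι → A) (b : Bool) : altProd x b [] = 1 := rfl

@[simp] lemma altProd_cons (x : ι → A) (b : Bool) (a : ι) (l : List ι) :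
    altProd x b (a :: l) = letter x b a * altProd x (!b) l := rfl

lemma altProd_append_singleton_of_eq_one {x : ι → A} {z : ι} (hz : x z = 1) (b : Bool)
    (l : List ι) : altProd x b (l ++ [z]) = altProd x b l := by
  induction l generalizing b with
  | nil => cases b <;> simp [letter, hz]
  | cons a l ih => simp [ih]

lemma altProd_comp (x : ι → A) (e : ι' → ι) (b : Bool) (l : List ι') :
    altProd (x ∘ e) b l = altProd x b (l.map e) := by
  induction l generalizing b with
  | nil => rfl
  | cons a l ih => simp [ih, letter]

lemma altProd_conj {c : A} (hc : c ∈ unitary A) (x : ι → A) (b : Bool) {l : List ι}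
    (hl : Even l.length) :
    altProd (fun a => star c * x a) b l =
      star (if b then c else 1) * altProd x b l * (if b then c else 1) := by
  have hcc := Unitary.mul_star_self_of_mem hc
  induction l using List.twoStepInduction with
  | nil => cases b <;> simp [Unitary.star_mul_self_of_mem hc]
  | singleton a => simp at hl
  | cons_cons a a' l ih _ =>
    rw [List.length_cons, List.length_cons, Nat.even_add_one, Nat.even_add_one, not_not] at hl
    cases b <;> simp [letter, ih hl, mul_assoc, star_mul, ← mul_assoc c (star c), hcc]

def signedProd (v : κ → A) (L : List (κ × Bool)) : A := (L.map fun p => letter v p.2 p.1).prod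

/-- Reduced words of the free group on `κ`, the letter `(j, false)` standing for `j⁻¹`. -/
def IsReduced (L : List (κ × Bool)) : Prop := L.IsChain fun p q => p.1 = q.1 → p.2 = q.2

end Words

section Syllables

variable {κ A : Type*} [Ring A] [StarRing A]

def haarProd (v : κ → A) (H : List (κ × ℤ)) : A := (H.map fun p => zpowU (v p.1) p.2).prod

def IsReducedSyllables (H : List (κ × ℤ)) : Prop :=
  H.IsChain (fun p q => p.1 ≠ q.1) ∧ ∀ p ∈ H, p.2 ≠ 0

def letters (H : List (κ × ℤ)) : List (κ × Bool) :=
  H.flatMap fun p => List.replicate p.2.natAbs (p.1, decide (0 < p.2))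

lemma zpowU_eq_letter_pow (v : κ → A) (j : κ) (e : ℤ) :
    zpowU (v j) e = letter v (decide (0 < e)) j ^ e.natAbs := by
  rcases lt_trichotomy e 0 with h | rfl | h
  · simp only [zpowU, letter, h.not_ge, h.not_gt, if_false, decide_false]
    congr 1; omega
  · simp [zpowU]
  · simp only [zpowU, letter, h.le, h, if_true, decide_true]
    congr 1; omega

lemma signedProd_letters (v : κ → A) (H : List (κ × ℤ)) :
    signedProd v (letters H) = haarProd v H := by
  induction H with
  | nil => rfl
  | cons p H ih =>
    simp only [signedProd, letters, haarProd, List.flatMap_cons, List.map_append,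
      List.prod_append, List.map_replicate, List.prod_replicate, List.map_cons, List.prod_cons,
      zpowU_eq_letter_pow] at ih ⊢
    rw [ih]

end Syllables

section Letters

variable {κ : Type*}

lemma letters_cons_of_ne_zero (j : κ) {e : ℤ} (he : e ≠ 0) (H : List (κ × ℤ)) :
    letters ((j, e) :: H) =
      (j, decide (0 < e)) :: (List.replicate (e.natAbs - 1) (j, decide (0 < e)) ++ letters H) := by
  obtain ⟨k, hk⟩ := Nat.exists_eq_add_one.2 (Int.natAbs_pos.2 he)
  simp [letters, hk, List.replicate_succ]

lemma letters_singleton (j : κ) (c : Bool) : letters [(j, if c then 1 else -1)] = [(j, c)] := by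
  cases c <;> simp [letters]

lemma letters_cons_add_sign (j : κ) {e : ℤ} (he : e ≠ 0) (H : List (κ × ℤ)) :
    letters ((j, e + e.sign) :: H) = (j, decide (0 < e)) :: letters ((j, e) :: H) := by
  have hsign : decide (0 < e + e.sign) = decide (0 < e) ∧ (e + e.sign).natAbs = e.natAbs + 1 := by
    rcases he.lt_or_gt with h | h
    · simp [Int.sign_eq_neg_one_of_neg h]; omega
    · simp [Int.sign_eq_one_of_pos h, h]; omega
  rw [letters_cons_of_ne_zero j he, letters_cons_of_ne_zero j (by omega), hsign.1, hsign.2]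
  obtain ⟨k, hk⟩ := Nat.exists_eq_add_one.2 (Int.natAbs_pos.2 he)
  simp [hk, List.replicate_succ]

lemma IsReducedSyllables.isReduced_letters {H : List (κ × ℤ)} (hH : IsReducedSyllables H) :
    IsReduced (letters H) := by
  induction H with
  | nil => exact List.IsChain.nil
  | cons p H ih =>
    obtain ⟨hchain, hne⟩ := hH
    change IsReduced (List.replicate _ _ ++ letters H)
    refine List.IsChain.append (List.isChain_replicate_of_rel _ fun _ => rfl)
      (ih ⟨hchain.tail, fun q hq => hne q (List.mem_cons_of_mem _ hq)⟩) fun x hx y hy hxy => ?_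
    cases H with
    | nil => simp [letters] at hy
    | cons q H =>
      obtain ⟨j, e⟩ := q
      rw [letters_cons_of_ne_zero j (hne (j, e) (by simp))] at hy
      have hx1 : x.1 = p.1 := by
        simpa using congrArg Prod.fst (List.eq_of_mem_replicate (List.mem_of_getLast? hx))
      simp only [List.head?_cons, Option.mem_def, Option.some.injEq] at hy
      exact absurd (hx1.symm.trans (hxy.trans (congrArg Prod.fst hy).symm))
        (List.isChain_cons_cons.1 hchain).1

lemma exists_letters_eq {L : List (κ × Bool)} (hL : IsReduced L) :
    ∃ H, IsReducedSyllables H ∧ letters H = L := by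
  induction L with
  | nil => exact ⟨[], ⟨List.IsChain.nil, by simp⟩, rfl⟩
  | cons p L ih =>
    obtain ⟨j, c⟩ := p
    obtain ⟨H, ⟨hchain, hne⟩, rfl⟩ := ih hL.tail
    cases H with
    | nil =>
      refine ⟨[(j, if c then 1 else -1)], ⟨List.isChain_singleton _, ?_⟩,
        letters_singleton j c⟩
      cases c <;> simp
    | cons q H =>
      obtain ⟨j', e⟩ := q
      have he : e ≠ 0 := hne (j', e) (by simp)
      by_cases hj : j' = j
      · subst hj
        have hc : c = decide (0 < e) := by
          rw [letters_cons_of_ne_zero j' he] at hL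
          exact (List.isChain_cons_cons.1 hL).1 rfl
        refine ⟨(j', e + e.sign) :: H, ⟨?_, ?_⟩, by rw [letters_cons_add_sign j' he, hc]⟩
        · exact List.isChain_cons.2 ⟨(List.isChain_cons.1 hchain).1, hchain.tail⟩
        · refine List.forall_mem_cons.2 ⟨?_, fun q hq => hne q (List.mem_cons_of_mem _ hq)⟩
          rcases he.lt_or_gt with h | h
          · rw [Int.sign_eq_neg_one_of_neg h]; omega
          · rw [Int.sign_eq_one_of_pos h]; omega
      · refine ⟨(j, if c then 1 else -1) :: (j', e) :: H, ⟨?_, ?_⟩, ?_⟩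
        · exact List.isChain_cons_cons.2 ⟨Ne.symm hj, hchain⟩
        · exact List.forall_mem_cons.2 ⟨by cases c <;> simp, hne⟩
        · rw [← List.singleton_append, letters, List.flatMap_append, ← letters, ← letters,
            letters_singleton, List.singleton_append]

end Letters

section Units

variable {κ A : Type*} [Monoid A] [StarMul A]

def dropUnits : Bool → List (Option κ) → List (κ × Bool)
  | _, [] => []
  | b, none :: l => dropUnits (!b) l
  | b, some j :: l => (j, b) :: dropUnits (!b) l

lemma signedProd_dropUnits (v : κ → A) (b : Bool) (l : List (Option κ)) :
    signedProd v (dropUnits b l) = altProd (fun o => o.elim 1 v) b l := by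
  induction l generalizing b with
  | nil => rfl
  | cons o l ih =>
    cases o with
    | none => cases b <;> simp [dropUnits, letter, ← ih]
    | some j => simp [dropUnits, signedProd, letter, ← ih]

lemma dropUnits_ne_nil {l : List (Option κ)} {j : κ} (hj : some j ∈ l) (b : Bool) :
    dropUnits b l ≠ [] := by
  induction l generalizing b with
  | nil => simp at hj
  | cons o l ih =>
    cases o with
    | none => exact ih (by simpa using hj) _
    | some j' => simp [dropUnits]

lemma isReduced_dropUnits : ∀ (b : Bool) (l : List (Option κ)), l.IsChain (· ≠ ·) →
    IsReduced (dropUnits b l)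
  | _, [], _ => List.IsChain.nil
  | b, none :: l, h => isReduced_dropUnits (!b) l h.tail
  | _, [some _], _ => List.isChain_singleton _
  | b, [some _, none], _ => List.isChain_singleton _
  | b, some j :: some j' :: l, h => by
    refine List.isChain_cons.2 ⟨?_, isReduced_dropUnits (!b) (some j' :: l) h.tail⟩
    simpa [dropUnits] using (List.isChain_cons_cons.1 h).1
  | b, some j :: none :: some j' :: l, h => by
    refine List.isChain_cons.2 ⟨by simp [dropUnits], ?_⟩
    simpa only [IsReduced, dropUnits, Bool.not_not] using
      isReduced_dropUnits b (some j' :: l) h.tail.tail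
  | _, _ :: none :: none :: _, h => absurd rfl (List.isChain_cons_cons.1 h.tail).1

lemma exists_dropUnits_eq (j : κ) (c : Bool) {L : List (κ × Bool)}
    (hL : IsReduced ((j, c) :: L)) :
    ∃ l, (some j :: l).IsChain (· ≠ ·) ∧ dropUnits (!c) l = L := by
  induction L generalizing j c with
  | nil => exact ⟨[], List.isChain_singleton _, rfl⟩
  | cons p L ih =>
    obtain ⟨j', c'⟩ := p
    obtain ⟨l, hl, hdrop⟩ := ih j' c' hL.tail
    by_cases hc : c' = c
    · subst hc
      refine ⟨none :: some j' :: l, ?_, by simp [dropUnits, hdrop]⟩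
      simpa using hl
    · refine ⟨some j' :: l, List.isChain_cons_cons.2 ⟨?_, hl⟩, ?_⟩
      · exact fun h => hc ((List.isChain_cons_cons.1 hL).1 (Option.some_injective _ h)).symm
      · cases c <;> cases c' <;> simp_all [dropUnits]

end Units

section Correspondence

variable {κ A : Type*} [Ring A] [StarRing A]

lemma exists_haarProd_eq_altProd (v : κ → A) (b : Bool)
    {l : List (Option κ)} (hl : l.IsChain (· ≠ ·)) {j : κ} (hj : some j ∈ l) :
    ∃ H, IsReducedSyllables H ∧ H ≠ [] ∧
      haarProd v H = altProd (fun o => o.elim 1 v) b l := by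
  obtain ⟨H, hH, hHL⟩ := exists_letters_eq (isReduced_dropUnits b l hl)
  refine ⟨H, hH, ?_, by rw [← signedProd_letters, hHL, signedProd_dropUnits]⟩
  rintro rfl
  exact dropUnits_ne_nil hj b hHL.symm

lemma exists_altProd_eq_haarProd (v : κ → A)
    {H : List (κ × ℤ)} (hH : IsReducedSyllables H) (hne : H ≠ []) :
    ∃ b l, l.IsChain (· ≠ ·) ∧ (∃ a ∈ l, a ≠ none) ∧
      altProd (fun o => o.elim 1 v) b l = haarProd v H := by
  obtain ⟨⟨j, e⟩, H', rfl⟩ := List.exists_cons_of_ne_nil hne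
  have hletters := letters_cons_of_ne_zero j (hH.2 (j, e) (by simp)) H'
  have hred := hH.isReduced_letters
  rw [hletters] at hred
  obtain ⟨l, hl, hdrop⟩ := exists_dropUnits_eq j _ hred
  refine ⟨decide (0 < e), some j :: l, hl, ⟨some j, by simp, by simp⟩, ?_⟩
  rw [← signedProd_dropUnits, ← signedProd_letters, hletters, dropUnits, hdrop]

end Correspondence

section Vanishing

variable {ι ι' A : Type*} [Monoid A] [StarMul A]

def AltVanishes (τ : A → ℂ) (x : ι → A) : Prop :=
  ∀ (b : Bool) (l : List ι), l ≠ [] → Even l.length → l.IsChain (· ≠ ·) →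
    τ (altProd x b l) = 0

lemma altVanishes_iff_of_eq_one {τ : A → ℂ} {x : ι → A} {z : ι} (hz : x z = 1) :
    AltVanishes τ x ↔
      ∀ (b : Bool) (l : List ι), l.IsChain (· ≠ ·) → (∃ a ∈ l, a ≠ z) →
        τ (altProd x b l) = 0 := by
  refine ⟨fun h b l hl ⟨a, ha, haz⟩ => ?_, fun h b l hne heven hl => h b l hl ?_⟩
  · by_cases heven : Even l.length
    · exact h b l (List.ne_nil_of_mem ha) heven hl
    obtain ⟨l', c, rfl⟩ := List.eq_nil_or_concat l |>.resolve_left (List.ne_nil_of_mem ha)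
    rw [List.concat_eq_append] at ha hl heven ⊢
    rw [List.length_append, List.length_singleton, Nat.even_add_one, not_not] at heven
    by_cases hc : c = z
    · subst hc
      have ha' : a ∈ l' := (List.mem_append.1 ha).resolve_right (by simpa using haz)
      rw [altProd_append_singleton_of_eq_one hz]
      exact h b l' (List.ne_nil_of_mem ha') heven hl.left_of_append
    · rw [← altProd_append_singleton_of_eq_one hz]
      refine h b _ (by simp) (by simpa [Nat.even_add_one] using heven)
        (hl.append (List.isChain_singleton _) ?_)
      simpa [List.getLast?_concat] using hc
  · obtain ⟨a, l', rfl⟩ := List.exists_cons_of_ne_nil hne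
    by_cases ha : a = z
    · cases l' with
      | nil => simp at heven
      | cons a' l'' =>
        exact ⟨a', by simp, fun h' => (List.isChain_cons_cons.1 hl).1 (ha.trans h'.symm)⟩
    · exact ⟨a, by simp, ha⟩

lemma altVanishes_conj {τ : A → ℂ} (htr : ∀ x y, τ (x * y) = τ (y * x)) {c : A}
    (hc : c ∈ unitary A) (x : ι → A) :
    AltVanishes τ (fun a => star c * x a) ↔ AltVanishes τ x := by
  have key : ∀ b (l : List ι), Even l.length →
      τ (altProd (fun a => star c * x a) b l) = τ (altProd x b l) := by
    intro b l hl
    have hg : (if b then c else 1) * star (if b then c else 1) = 1 := by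
      cases b <;> simp [Unitary.mul_star_self_of_mem hc]
    rw [altProd_conj hc x b hl, htr, ← mul_assoc, hg, one_mul]
  constructor <;> intro h b l hne heven hl
  · rw [← key b l heven]; exact h b l hne heven hl
  · rw [key b l heven]; exact h b l hne heven hl

lemma altVanishes_comp_equiv {τ : A → ℂ} (x : ι → A) (e : ι' ≃ ι) :
    AltVanishes τ (x ∘ e) ↔ AltVanishes τ x := by
  constructor <;> intro h b l hne heven hl
  · have := h b (l.map e.symm) (by simpa using hne) (by simpa using heven)
      ((List.isChain_map _).2 (hl.imp fun _ _ hab h' => hab (e.symm.injective h')))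
    rwa [altProd_comp, List.map_map, e.self_comp_symm, List.map_id] at this
  · rw [altProd_comp]
    exact h b _ (by simpa using hne) (by simpa using heven)
      ((List.isChain_map _).2 (hl.imp fun _ _ hab h' => hab (e.injective h')))

end Vanishing

section Haar

variable {κ A : Type*} [Ring A] [StarRing A]

def HaarVanishes (τ : A → ℂ) (v : κ → A) : Prop :=
  ∀ H : List (κ × ℤ), IsReducedSyllables H → H ≠ [] → τ (haarProd v H) = 0

lemma altVanishes_option_iff (τ : A → ℂ) (v : κ → A) :
    AltVanishes τ (fun o : Option κ => o.elim 1 v) ↔ HaarVanishes τ v := by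
  rw [altVanishes_iff_of_eq_one (z := none) rfl]
  constructor
  · intro h H hH hne
    obtain ⟨b, l, hl, hsome, hprod⟩ := exists_altProd_eq_haarProd v hH hne
    rw [← hprod]; exact h b l hl hsome
  · rintro h b l hl ⟨a, ha, hnone⟩
    obtain ⟨j, rfl⟩ := Option.ne_none_iff_exists'.1 hnone
    obtain ⟨H, hH, hne, hprod⟩ := exists_haarProd_eq_altProd v b hl ha
    rw [← hprod]; exact h H hH hne

end Haar

section FinIndexed

variable {ι A : Type*} [Ring A] [StarRing A]

lemma isChain_ofFn_iff {α : Type*} {m : ℕ} {f : Fin m → α} {r : α → α → Prop} :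
    (List.ofFn f).IsChain r ↔ ∀ s t : Fin m, (t : ℕ) = s + 1 → r (f s) (f t) := by
  rw [List.isChain_ofFn]
  exact ⟨fun h s t hst => by obtain ⟨t, ht⟩ := t; subst hst; exact h s ht,
    fun h s hs => h ⟨s, by omega⟩ ⟨s + 1, hs⟩ rfl⟩

lemma prod_ofFn_letter (x : ι → A) {m : ℕ} (i : Fin m → ι) (b : Bool) :
    (List.ofFn fun s : Fin m => letter x (decide ((s : ℕ) % 2 = 0) == b) (i s)).prod =
      altProd x b (List.ofFn i) := by
  induction m generalizing b with
  | zero => rfl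
  | succ m ih =>
    rw [List.ofFn_succ, List.ofFn_succ, List.prod_cons, altProd_cons, ← ih]
    cases b <;> simp [Nat.succ_mod_two_eq_zero_iff, ← decide_not]

lemma isLFree_iff_altVanishes {n : ℕ} (τ : A → ℂ) (x : Fin n → A) :
    IsLFree τ x ↔ AltVanishes τ x := by
  have hword : ∀ {m} (i : Fin m → Fin n), LWord x i = altProd x true (List.ofFn i) ∧
      LWordStar x i = altProd x false (List.ofFn i) := fun i => by
    simp only [← prod_ofFn_letter, LWord, LWordStar, letter]
    refine ⟨by simp, congrArg _ (List.ofFn_inj.2 (funext fun s => ?_))⟩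
    rcases Nat.mod_two_eq_zero_or_one s with hs | hs <;> simp [hs]
  constructor
  · intro h b l hne heven hl
    obtain ⟨k, hk⟩ := heven.two_dvd
    have hofFn : List.ofFn (fun s : Fin (2 * k) => l[(s : ℕ)]) = l :=
      List.ext_getElem (by simp [hk]) (by simp)
    have hk1 : 1 ≤ k :=
      Nat.one_le_iff_ne_zero.2 (by rintro rfl; exact hne (List.length_eq_zero_iff.1 hk))
    rw [← hofFn] at hl ⊢
    have := h k hk1 _ (isChain_ofFn_iff.1 hl)
    cases b
    · exact (hword _).2 ▸ this.2
    · exact (hword _).1 ▸ this.1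
  · intro h k hk i hadj
    have hne : List.ofFn i ≠ [] := by simp [List.ofFn_eq_nil_iff]; omega
    have heven : Even (List.ofFn i).length := by simp
    rw [(hword i).1, (hword i).2]
    exact ⟨h true _ hne heven (isChain_ofFn_iff.2 hadj),
      h false _ hne heven (isChain_ofFn_iff.2 hadj)⟩

lemma areHaarFree_iff_haarVanishes {m : ℕ} (τ : A → ℂ) (v : Fin m → A) :
    AreHaarFree τ v ↔ HaarVanishes τ v := by
  constructor
  · intro h H ⟨hchain, hne⟩ hH
    have hofFn : List.ofFn (fun s : Fin H.length => (H[(s : ℕ)].1, H[(s : ℕ)].2)) = H := by simp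
    rw [← hofFn] at hchain
    rw [haarProd, ← List.ofFn_getElem_eq_map]
    exact h H.length (List.length_pos_iff.2 hH) _ _ (fun s => hne _ (List.getElem_mem _))
      fun s t hst => isChain_ofFn_iff.1 hchain s t hst
  · intro h r hr i e he hadj
    have := h (List.ofFn fun s => (i s, e s))
      ⟨isChain_ofFn_iff.2 hadj, by simpa using he⟩ (by simp [List.ofFn_eq_nil_iff]; omega)
    simpa [haarProd, Function.comp_def] using this

end FinIndexed

end LFree

/-- Unitaries `u₁, …, uₙ` form an L-free family if and only if
`u₁* u₂, …, u₁* uₙ` are freely independent Haar unitaries. -/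
theorem isLFree_iff_haarFree
    {M : Type*} [NormedRing M] [StarRing M] [NormedAlgebra ℂ M]
    (τ : M → ℂ) (hτ : IsTracialState τ)
    (n : ℕ) (hn : 2 ≤ n)
    (u : Fin n → M) (hu : ∀ i, IsUnitary (u i)) :
    IsLFree τ u ↔
      AreHaarFree τ (fun i : Fin (n - 1) =>
        star (u ⟨0, by omega⟩) * u (Fin.cast (by omega : n - 1 + 1 = n) i.succ)) := by
  set v := fun i : Fin (n - 1) =>
    star (u ⟨0, by omega⟩) * u (Fin.cast (by omega : n - 1 + 1 = n) i.succ)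
  let e : Option (Fin (n - 1)) ≃ Fin n := (finSuccEquiv (n - 1)).symm.trans (finCongr (by omega))
  have hw : (fun a => star (u ⟨0, by omega⟩) * u a) ∘ e = fun o => o.elim 1 v := by
    funext o
    cases o with
    | none => exact (hu ⟨0, by omega⟩).1
    | some i => simp [e, v]
  rw [LFree.isLFree_iff_altVanishes, ← LFree.altVanishes_conj hτ.2.2.2 (hu ⟨0, by omega⟩),
    ← LFree.altVanishes_comp_equiv _ e, hw, LFree.altVanishes_option_iff,
    LFree.areHaarFree_iff_haarVanishes]
end

section
/- Let M be a unital C*-algebra with a tracial state τ, let n ≥ 1, and let v₁, …, vₙ ∈ M be unitaries such that for every m ≥ 1 and all indices i₁, j₁, …, i_m, j_m ∈ {1, …, n}, the complex number τ(v_{i₁} v_{j₁}* v_{i₂} v_{j₂}* ⋯ v_{i_m} v_{j_m}*) has non-negative real part. Then ‖v₁ + v₂ + ⋯ + vₙ‖ ≥ 2√(n−1). -/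
open scoped BigOperators ComplexOrder

/-!
Write `S = ∑ i, vᵢ`. Expanding `(S S*)ᵐ` gives the sum of all words
`v_{i₁} v_{j₁}* ⋯ v_{iₘ} v_{jₘ}*`, each of whose traces has non-negative real part. When the
letters `i₁ j₁ ⋯ iₘ jₘ` trace a closed walk in the Cayley tree of the free product of `n` copies
of `ℤ/2`, the word telescopes to `1` by unitarity; the closed walks that never leave the start
along one fixed generator are counted by `(n - 1)ᵐ Cₘ`, `Cₘ` the Catalan number. Hence
`(n - 1)ᵐ Cₘ ≤ Re τ((S S*)ᵐ) ≤ ‖S‖^(2m)`, and as `Cₘ` grows like `4ᵐ` up to a polynomial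
factor, `4 (n - 1) ≤ ‖S‖²`.
-/

open Finset

section Reduction

variable {α : Type*} [DecidableEq α]

/-- Free reduction in the free product of copies of `ℤ/2`, the reduced word being kept reversed
on a stack. -/
def stackReduce : List α → List α → List α
  | st, [] => st
  | st, a :: w => stackReduce (if st.head? = some a then st.tail else a :: st) w

theorem stackReduce_append (x y st : List α) :
    stackReduce st (x ++ y) = stackReduce (stackReduce st x) y := by
  induction x generalizing st with
  | nil => rfl
  | cons a w ih => exact ih _

theorem stackReduce_cons_cons_of_ne {t a : α} (h : t ≠ a) (st w : List α) :
    stackReduce (t :: st) (a :: w) = stackReduce (a :: t :: st) w := by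
  simp [stackReduce, h]

theorem stackReduce_cons_cons_self (a : α) (st w : List α) :
    stackReduce (a :: st) (a :: w) = stackReduce st w := by
  simp [stackReduce]

end Reduction

section AlternatingProduct

variable {α M : Type*} [Monoid M]

def altProd (f g : α → M) : List α → M
  | [] => 1
  | a :: w => f a * altProd g f w

theorem altProd_append (f g : α → M) (x y : List α) :
    altProd f g (x ++ y) =
      altProd f g x * if Even x.length then altProd f g y else altProd g f y := by
  induction x generalizing f g with
  | nil => simp [altProd]
  | cons a x ih =>
    simp only [List.cons_append, altProd, ih, List.length_cons, Nat.even_add_one, mul_assoc]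
    split_ifs <;> rfl

theorem altProd_append_of_even (f g : α → M) {x : List α} (hx : Even x.length) (y : List α) :
    altProd f g (x ++ y) = altProd f g x * altProd f g y := by
  rw [altProd_append, if_pos hx]

def flattenPairs (l : List (α × α)) : List α := l.flatMap fun p => [p.1, p.2]

theorem prod_map_mul_eq_altProd_flattenPairs (f g : α → M) (l : List (α × α)) :
    (l.map fun p => f p.1 * g p.2).prod = altProd f g (flattenPairs l) := by
  induction l with
  | nil => rfl
  | cons p l ih =>
    simp only [List.map_cons, List.prod_cons, ih, mul_assoc]
    rfl

theorem exists_flattenPairs_ofFn_eq {m : ℕ} {w : List α} (hw : w.length = 2 * m) :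
    ∃ f : Fin m → α × α, flattenPairs (List.ofFn f) = w := by
  induction m generalizing w with
  | zero => exact ⟨Fin.elim0, by simp_all [flattenPairs]⟩
  | succ m ih =>
    obtain _ | ⟨x, _ | ⟨y, w⟩⟩ := w
    · simp at hw
    · simp at hw; omega
    obtain ⟨f, hf⟩ := ih (w := w) (by simp at hw; omega)
    exact ⟨Fin.cons (x, y) f, by simp [List.ofFn_succ, flattenPairs, ← hf]⟩

end AlternatingProduct

/-- Closed walks of length `2 * m` in the Cayley tree of `ℤ/2 ∗ ⋯ ∗ ℤ/2` (generators `Fin n`)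
that never leave their starting vertex along the edge `t`: a first step `a ≠ t`, an excursion
avoiding `a`, the step back along `a`, and a further excursion avoiding `t`. -/
def excursions (n : ℕ) : ℕ → Fin n → Finset (List (Fin n))
  | 0, _ => {[]}
  | m + 1, t =>
    (univ.erase t).biUnion fun a => univ.biUnion fun k : Fin (m + 1) =>
      (excursions n k a ×ˢ excursions n (m - k) t).image fun p => a :: (p.1 ++ a :: p.2)

section Excursions

variable {n : ℕ}

theorem mem_excursions_zero {t : Fin n} {w : List (Fin n)} :
    w ∈ excursions n 0 t ↔ w = [] := by
  rw [excursions, mem_singleton]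

theorem mem_excursions_succ {m : ℕ} {t : Fin n} {w : List (Fin n)} :
    w ∈ excursions n (m + 1) t ↔ ∃ a ≠ t, ∃ k ≤ m, ∃ w₁ ∈ excursions n k a,
      ∃ w₂ ∈ excursions n (m - k) t, w = a :: (w₁ ++ a :: w₂) := by
  rw [excursions]
  simp only [mem_biUnion, mem_erase, mem_univ, mem_image, mem_product, and_true, true_and]
  constructor
  · rintro ⟨a, hat, k, ⟨w₁, w₂⟩, ⟨h₁, h₂⟩, rfl⟩
    exact ⟨a, hat, k, Nat.lt_succ_iff.mp k.isLt, w₁, h₁, w₂, h₂, rfl⟩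
  · rintro ⟨a, hat, k, hk, w₁, h₁, w₂, h₂, rfl⟩
    exact ⟨a, hat, ⟨k, Nat.lt_succ_of_le hk⟩, ⟨w₁, w₂⟩, ⟨h₁, h₂⟩, rfl⟩

theorem length_of_mem_excursions {m : ℕ} {t : Fin n} {w : List (Fin n)}
    (hw : w ∈ excursions n m t) : w.length = 2 * m := by
  induction m using Nat.strong_induction_on generalizing t w with
  | _ m ih =>
    rcases m with _ | m
    · rw [mem_excursions_zero.mp hw]
      rfl
    · obtain ⟨a, -, k, hk, w₁, h₁, w₂, h₂, rfl⟩ := mem_excursions_succ.mp hw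
      simp only [List.length_cons, List.length_append, ih k (by omega) h₁,
        ih (m - k) (by omega) h₂]
      omega

/-- The words of `excursions`, as an inductive predicate to induct on. -/
inductive IsExcursion : Fin n → List (Fin n) → Prop
  | nil (t : Fin n) : IsExcursion t []
  | cons {t a : Fin n} {w₁ w₂ : List (Fin n)} :
      a ≠ t → IsExcursion a w₁ → IsExcursion t w₂ → IsExcursion t (a :: (w₁ ++ a :: w₂))

theorem isExcursion_of_mem_excursions {m : ℕ} {t : Fin n} {w : List (Fin n)}
    (hw : w ∈ excursions n m t) : IsExcursion t w := by
  induction m using Nat.strong_induction_on generalizing t w with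
  | _ m ih =>
    rcases m with _ | m
    · rw [mem_excursions_zero.mp hw]
      exact .nil t
    · obtain ⟨a, hat, k, hk, w₁, h₁, w₂, h₂, rfl⟩ := mem_excursions_succ.mp hw
      exact .cons hat (ih k (by omega) h₁) (ih (m - k) (by omega) h₂)

namespace IsExcursion

theorem even_length {t : Fin n} {w : List (Fin n)} (hw : IsExcursion t w) :
    Even w.length := by
  induction hw with
  | nil => exact Even.zero
  | cons _ _ _ ih₁ ih₂ =>
    rw [List.length_cons, List.length_append, List.length_cons]
    obtain ⟨r₁, h₁⟩ := ih₁
    obtain ⟨r₂, h₂⟩ := ih₂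
    exact ⟨r₁ + r₂ + 1, by omega⟩

theorem stackReduce_eq {t : Fin n} {w : List (Fin n)} (hw : IsExcursion t w)
    (st : List (Fin n)) : stackReduce (t :: st) w = t :: st := by
  induction hw generalizing st with
  | nil => rfl
  | cons hat _ _ ih₁ ih₂ =>
    rw [stackReduce_cons_cons_of_ne hat.symm, stackReduce_append, ih₁,
      stackReduce_cons_cons_self, ih₂]

theorem stackReduce_of_prefix {t : Fin n} {w p : List (Fin n)} (hw : IsExcursion t w)
    (hp : p <+: w) (st : List (Fin n)) : ∃ r, stackReduce (t :: st) p = r ++ t :: st := by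
  induction hw generalizing p st with
  | nil => exact ⟨[], by rw [List.prefix_nil.mp hp]; rfl⟩
  | @cons t a w₁ w₂ hat h₁ _ ih₁ ih₂ =>
    rcases p with _ | ⟨b, p⟩
    · exact ⟨[], rfl⟩
    obtain ⟨rfl, hp⟩ := List.cons_prefix_cons.mp hp
    rw [stackReduce_cons_cons_of_ne hat.symm]
    rcases List.prefix_or_prefix_of_prefix hp (List.prefix_append w₁ (b :: w₂)) with
      hp₁ | ⟨q, rfl⟩
    · obtain ⟨r, hr⟩ := ih₁ hp₁ (t :: st)
      exact ⟨r ++ [b], by rw [hr]; simp⟩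
    · rw [stackReduce_append, h₁.stackReduce_eq]
      rcases q with _ | ⟨c, q⟩
      · exact ⟨[b], rfl⟩
      obtain ⟨rfl, hq⟩ := List.cons_prefix_cons.mp ((List.prefix_append_right_inj w₁).mp hp)
      rw [stackReduce_cons_cons_self]
      exact ih₂ hq st

theorem length_le_of_append_cons_eq {a : Fin n} {w₁ w₂ w₁' w₂' : List (Fin n)}
    (h₁ : IsExcursion a w₁) (h₁' : IsExcursion a w₁') (h : w₁ ++ a :: w₂ = w₁' ++ a :: w₂') :
    w₁'.length ≤ w₁.length := by
  -- Otherwise `w₁ ++ [a]` is a prefix of `w₁'` that pops the stack below `a`.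
  by_contra! hlt
  have hpre : w₁ ++ [a] <+: w₁' :=
    List.prefix_of_prefix_length_le ⟨w₂, by simp⟩ (h ▸ List.prefix_append w₁' _) (by simpa)
  obtain ⟨r, hr⟩ := h₁'.stackReduce_of_prefix hpre []
  rw [stackReduce_append, h₁.stackReduce_eq, stackReduce_cons_cons_self] at hr
  simp [stackReduce] at hr

/-- The first return to the starting vertex is determined by the word. -/
theorem append_cons_inj {a : Fin n} {w₁ w₂ w₁' w₂' : List (Fin n)} (h₁ : IsExcursion a w₁)
    (h₁' : IsExcursion a w₁') (h : w₁ ++ a :: w₂ = w₁' ++ a :: w₂') : w₁ = w₁' ∧ w₂ = w₂' := by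
  have hlen := le_antisymm (length_le_of_append_cons_eq h₁' h₁ h.symm)
    (length_le_of_append_cons_eq h₁ h₁' h)
  obtain ⟨rfl, h₂⟩ := List.append_inj h hlen
  exact ⟨rfl, List.cons_injective h₂⟩

theorem altProd_eq_one {M : Type*} [Monoid M] {f g : Fin n → M} (hfg : ∀ a, f a * g a = 1)
    (hgf : ∀ a, g a * f a = 1) {t : Fin n} {w : List (Fin n)} (hw : IsExcursion t w) :
    altProd f g w = 1 := by
  induction hw generalizing f g with
  | nil => rfl
  | cons _ h₁ _ ih₁ ih₂ =>
    rw [altProd, altProd_append_of_even _ _ h₁.even_length, ih₁ hgf hfg, altProd,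
      ih₂ hfg hgf, one_mul, mul_one, hfg]

end IsExcursion

theorem card_excursions_succ (m : ℕ) (t : Fin n) :
    (excursions n (m + 1) t).card = ∑ a ∈ univ.erase t, ∑ k : Fin (m + 1),
      (excursions n k a).card * (excursions n (m - k) t).card := by
  rw [excursions, card_biUnion]
  · refine sum_congr rfl fun a _ => ?_
    rw [card_biUnion]
    · refine sum_congr rfl fun k _ => ?_
      rw [card_image_of_injOn, card_product]
      rintro ⟨w₁, w₂⟩ hw ⟨w₁', w₂'⟩ hw' h
      simp only [coe_product, Set.mem_prod, mem_coe] at hw hw'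
      obtain ⟨rfl, rfl⟩ := (isExcursion_of_mem_excursions hw.1).append_cons_inj
        (isExcursion_of_mem_excursions hw'.1) (List.cons_injective h)
      rfl
    · intro k _ k' _ hkk'
      simp only [Function.onFun, disjoint_left, mem_image, mem_product]
      rintro _ ⟨⟨w₁, w₂⟩, ⟨h₁, -⟩, rfl⟩ ⟨⟨w₁', w₂'⟩, ⟨h₁', -⟩, h⟩
      obtain ⟨rfl, -⟩ := (isExcursion_of_mem_excursions h₁').append_cons_inj
        (isExcursion_of_mem_excursions h₁) (List.cons_injective h)
      have := (length_of_mem_excursions h₁).symm.trans (length_of_mem_excursions h₁')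
      exact hkk' (Fin.ext (by omega))
  · intro a _ a' _ haa'
    simp only [Function.onFun, disjoint_left, mem_biUnion, mem_image]
    rintro _ ⟨_, _, _, _, rfl⟩ ⟨_, _, _, _, h⟩
    exact haa' (List.cons.inj h).1.symm

theorem pow_mul_catalan_le_card_excursions (m : ℕ) (t : Fin n) :
    (n - 1) ^ m * catalan m ≤ (excursions n m t).card := by
  induction m using Nat.strong_induction_on generalizing t with
  | _ m ih =>
    rcases m with _ | m
    · simp [excursions]
    have hsplit (k : Fin (m + 1)) : (n - 1) ^ m * (catalan k * catalan (m - k)) =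
        (n - 1) ^ (k : ℕ) * catalan k * ((n - 1) ^ (m - k) * catalan (m - k)) := by
      have hm : (n - 1) ^ m = (n - 1) ^ (k : ℕ) * (n - 1) ^ (m - k) := by
        rw [← pow_add, Nat.add_sub_cancel' (Nat.lt_succ_iff.mp k.isLt)]
      rw [hm]
      ring
    calc (n - 1) ^ (m + 1) * catalan (m + 1)
        = (n - 1) * ∑ k : Fin (m + 1), (n - 1) ^ m * (catalan k * catalan (m - k)) := by
          rw [catalan_succ, pow_succ', mul_assoc, mul_sum]
      _ = ∑ _a ∈ univ.erase t, ∑ k : Fin (m + 1),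
            (n - 1) ^ (k : ℕ) * catalan k * ((n - 1) ^ (m - k) * catalan (m - k)) := by
          simp only [hsplit, sum_const, card_erase_of_mem (mem_univ t), card_univ,
            Fintype.card_fin, smul_eq_mul]
      _ ≤ _ := by
          rw [card_excursions_succ]
          exact sum_le_sum fun a _ => sum_le_sum fun k _ =>
            Nat.mul_le_mul (ih k (by omega) a) (ih (m - k) (by omega) t)

end Excursions

theorem sum_pow_eq_sum_prod_ofFn {R ι : Type*} [Semiring R] [Fintype ι] (c : ι → R) (m : ℕ) :
    (∑ i, c i) ^ m = ∑ f : Fin m → ι, (List.ofFn fun s => c (f s)).prod := by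
  induction m with
  | zero => simp
  | succ m ih =>
    rw [pow_succ', ih, sum_mul_sum, ← (Fin.consEquiv fun _ => ι).sum_comp,
      Fintype.sum_prod_type]
    simp [List.ofFn_succ]

namespace IsTracialState

section Ring

variable {A : Type*} [Ring A] [StarRing A] [Algebra ℂ A] {τ : A → ℂ}

theorem map_add (hτ : IsTracialState τ) (x y : A) : τ (x + y) = τ x + τ y := by
  simpa using hτ.1 1 x y

theorem map_zero_s14 (hτ : IsTracialState τ) : τ 0 = 0 := by
  simpa using hτ.map_add 0 0

theorem map_smul (hτ : IsTracialState τ) (c : ℂ) (x : A) : τ (c • x) = c * τ x := by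
  simpa [hτ.map_zero_s14] using hτ.1 c x 0

def toLinearMap_s14 (hτ : IsTracialState τ) : A →ₗ[ℂ] ℂ where
  toFun := τ
  map_add' := hτ.map_add
  map_smul' := hτ.map_smul

theorem nonneg_of_mem_closure (hτ : IsTracialState τ) {x : A}
    (hx : x ∈ AddSubmonoid.closure (Set.range fun s : A => star s * s)) : 0 ≤ τ x := by
  induction hx using AddSubmonoid.closure_induction with
  | mem _ h =>
    obtain ⟨s, rfl⟩ := h
    exact hτ.2.2.1 s
  | zero => exact hτ.map_zero_s14.ge
  | add _ _ _ _ hx hy =>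
    rw [hτ.map_add]
    exact add_nonneg hx hy

end Ring

theorem re_le_norm {A : Type*} [CStarAlgebra A] {τ : A → ℂ} (hτ : IsTracialState τ) {x : A}
    (hx : IsSelfAdjoint x) : (τ x).re ≤ ‖x‖ := by
  let _ := CStarAlgebra.spectralOrder A
  let _ := CStarAlgebra.spectralOrderedRing A
  have hle := sub_nonneg.mpr hx.le_algebraMap_norm_self
  rw [StarOrderedRing.nonneg_iff] at hle
  have := Complex.nonneg_iff.mp (hτ.nonneg_of_mem_closure hle)
  rw [sub_eq_add_neg, hτ.map_add, ← neg_one_smul ℂ x, hτ.map_smul, Algebra.algebraMap_eq_smul_one,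
    ← Complex.coe_smul, hτ.map_smul, hτ.2.1] at this
  simpa using this.1

end IsTracialState

theorem card_excursions_le_re_trace_pow {A : Type*} [Ring A] [StarRing A] [Algebra ℂ A]
    {τ : A → ℂ} (hτ : IsTracialState τ) {n m : ℕ} {v : Fin n → A}
    (hv : ∀ i, IsUnitary (v i))
    (hpos : ∀ i j : Fin m → Fin n,
      0 ≤ (τ ((List.ofFn fun s : Fin m => v (i s) * star (v (j s))).prod)).re)
    (t : Fin n) :
    ((excursions n m t).card : ℝ) ≤ (τ (((∑ i, v i) * star (∑ i, v i)) ^ m)).re := by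
  classical
  let word (f : Fin m → Fin n × Fin n) : A :=
    (List.ofFn fun s => v (f s).1 * star (v (f s).2)).prod
  let good : Finset (Fin m → Fin n × Fin n) :=
    univ.filter fun f => flattenPairs (List.ofFn f) ∈ excursions n m t
  have hexpand : ((∑ i, v i) * star (∑ i, v i)) ^ m = ∑ f, word f := by
    rw [star_sum, sum_mul_sum, ← Fintype.sum_prod_type', sum_pow_eq_sum_prod_ofFn]
  have hword_good : ∀ f ∈ good, word f = 1 := by
    intro f hf
    rw [mem_filter] at hf
    change (List.ofFn ((fun p => v p.1 * star (v p.2)) ∘ f)).prod = 1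
    rw [← List.map_ofFn, prod_map_mul_eq_altProd_flattenPairs v fun a => star (v a)]
    exact (isExcursion_of_mem_excursions hf.2).altProd_eq_one (fun a => (hv a).2)
      (fun a => (hv a).1)
  have hcard : (excursions n m t).card ≤ good.card := by
    refine card_le_card_of_surjOn (fun f => flattenPairs (List.ofFn f)) fun w hw => ?_
    obtain ⟨f, hf⟩ := exists_flattenPairs_ofFn_eq (length_of_mem_excursions hw)
    exact ⟨f, by simpa [good, hf] using hw, hf⟩
  calc ((excursions n m t).card : ℝ) ≤ good.card := by exact_mod_cast hcard
    _ = ∑ f ∈ good, (τ (word f)).re := by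
      rw [sum_congr rfl fun f hf => by rw [hword_good f hf, hτ.2.1, Complex.one_re]]
      simp
    _ ≤ ∑ f, (τ (word f)).re :=
      sum_le_sum_of_subset_of_nonneg (subset_univ good) fun f _ _ => hpos _ _
    _ = (τ (((∑ i, v i) * star (∑ i, v i)) ^ m)).re := by
      rw [hexpand, ← Complex.re_sum]
      exact congrArg Complex.re (map_sum hτ.toLinearMap_s14 word univ).symm

theorem le_of_forall_pow_le_mul_sq_mul_pow {x y C : ℝ} (hy : 0 ≤ y)
    (h : ∀ m : ℕ, 1 ≤ m → x ^ m ≤ C * m ^ 2 * y ^ m) : x ≤ y := by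
  by_contra! hyx
  have hx : 0 < x := hy.trans_lt hyx
  have hq : y / x < 1 := (div_lt_one hx).mpr hyx
  have hlim := (tendsto_pow_const_mul_const_pow_of_lt_one 2 (div_nonneg hy hx.le) hq).const_mul C
  rw [mul_zero] at hlim
  obtain ⟨m, hm, hm1⟩ :=
    ((hlim.eventually_lt_const one_pos).and (Filter.eventually_ge_atTop 1)).exists
  have hxm : 0 < x ^ m := pow_pos hx m
  have := h m hm1
  rw [div_pow, ← mul_div_assoc, ← mul_div_assoc, div_lt_one hxm] at hm
  linarith

theorem four_mul_le_of_forall_pow_mul_catalan_le {c B : ℝ} (hB : 0 ≤ B)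
    (h : ∀ m : ℕ, 1 ≤ m → c ^ m * catalan m ≤ B ^ m) : 4 * c ≤ B := by
  rcases lt_or_ge c 0 with hc | hc
  · linarith
  refine le_of_forall_pow_le_mul_sq_mul_pow (C := 6) hB fun m hm => ?_
  have hcat : (4 : ℝ) ^ m ≤ (2 * m + 1) * (m + 1) * catalan m := by
    exact_mod_cast (Nat.four_pow_le_two_mul_add_one_mul_central_binom m).trans_eq
      (by rw [← Nat.centralBinom_eq_two_mul_choose, ← succ_mul_catalan_eq_centralBinom]; ring)
  have hm' : (1 : ℝ) ≤ m := by exact_mod_cast hm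
  calc (4 * c) ^ m = 4 ^ m * c ^ m := mul_pow _ _ _
    _ ≤ (2 * m + 1) * (m + 1) * catalan m * c ^ m := by gcongr
    _ ≤ 6 * m ^ 2 * (c ^ m * catalan m) := by
      rw [mul_assoc, mul_comm (c ^ m)]
      exact mul_le_mul_of_nonneg_right (by nlinarith) (by positivity)
    _ ≤ 6 * m ^ 2 * B ^ m := by gcongr; exact h m hm

/-- If all traces of words `v_{i₁} v_{j₁}* ⋯ v_{i_m} v_{j_m}*`
in the unitaries `v₁, …, vₙ` have non-negative real part, then
`‖v₁ + ⋯ + vₙ‖ ≥ 2√(n-1)`. -/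
theorem norm_sum_ge_of_nonneg_word_traces
    {M : Type*} [NormedRing M] [StarRing M] [CStarRing M] [NormedAlgebra ℂ M]
    [StarModule ℂ M] [CompleteSpace M]
    (τ : M → ℂ) (hτ : IsTracialState τ)
    (n : ℕ) (hn : 1 ≤ n)
    (v : Fin n → M) (hv : ∀ i, IsUnitary (v i))
    (hpos : ∀ (m : ℕ), 1 ≤ m → ∀ i j : Fin m → Fin n,
      0 ≤ (τ ((List.ofFn fun s : Fin m => v (i s) * star (v (j s))).prod)).re) :
    2 * Real.sqrt ((n : ℝ) - 1) ≤ ‖∑ i, v i‖ := by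
  let _ : CStarAlgebra M := {}
  set S := ∑ i, v i
  have hbound (m : ℕ) (hm : 1 ≤ m) : ((n - 1 : ℕ) : ℝ) ^ m * catalan m ≤ (‖S‖ ^ 2) ^ m :=
    calc ((n - 1 : ℕ) : ℝ) ^ m * catalan m ≤ (excursions n m ⟨0, hn⟩).card := by
          exact_mod_cast pow_mul_catalan_le_card_excursions m _
      _ ≤ (τ ((S * star S) ^ m)).re := card_excursions_le_re_trace_pow hτ hv (hpos m hm) _
      _ ≤ ‖(S * star S) ^ m‖ := hτ.re_le_norm ((IsSelfAdjoint.mul_star_self S).pow m)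
      _ ≤ ‖S * star S‖ ^ m := norm_pow_le' _ hm
      _ = (‖S‖ ^ 2) ^ m := by rw [CStarRing.norm_self_mul_star, sq]
  have h4 := four_mul_le_of_forall_pow_mul_catalan_le (by positivity) hbound
  rw [Nat.cast_sub hn, Nat.cast_one] at h4
  calc 2 * Real.sqrt ((n : ℝ) - 1) = Real.sqrt (4 * ((n : ℝ) - 1)) := by
        rw [show (4 : ℝ) = 2 ^ 2 by norm_num, Real.sqrt_mul (by positivity),
          Real.sqrt_sq zero_le_two]
    _ ≤ Real.sqrt (‖S‖ ^ 2) := Real.sqrt_le_sqrt h4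
    _ = ‖S‖ := Real.sqrt_sq (norm_nonneg S)
end
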